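/- (Unimodality of the mean RSS over the beam space, Theorem 1.) Let N be a positive even integer, let ϑ be a real number (the channel spatial angle), define ω_i = (2i − N)/N for every integer i, and define the directivity function D(x) = ‖∑_{n=0}^{N−1} exp(I·π·n·x)‖². Suppose the integer i⋆ satisfies |ω_{i⋆} − ϑ| ≤ 1/N. Then: (a) for all integers i, j with i⋆ − N/2 ≤ i ≤ j ≤ i⋆, D(ω_i − ϑ) ≤ D(ω_j − ϑ); (b) for all integers i, j with i⋆ ≤ i ≤ j ≤ i⋆ + N/2, D(ω_i − ϑ) ≥ D(ω_j − ϑ). Moreover, if 0 < |ω_{i⋆} − ϑ| < 1/N, then both inequalities are strict whenever i < j. -/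

import Mathlib

set_option maxHeartbeats 1000000


open Complex Finset

/-- The antenna directivity function `D(x) = ‖∑_{n=0}^{N−1} exp(I·π·n·x)‖²` of a
half-wavelength uniform linear array with `N` elements. -/
noncomputable def directivity (N : ℕ) (x : ℝ) : ℝ :=
  ‖∑ n ∈ Finset.range N, Complex.exp (Complex.I * (Real.pi : ℂ) * (n : ℂ) * (x : ℂ))‖ ^ 2

/-- The spatial angle `ω_i = (2i − N)/N` of the `i`-th beam. -/
noncomputable def beamAngle (N : ℕ) (i : ℤ) : ℝ := (2 * (i : ℝ) - N) / N

lemma sin_sq_half' (y : ℝ) : Real.sin (y / 2) ^ 2 = (1 - Real.cos y) / 2 := by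
  have h1 := Real.cos_two_mul (y / 2)
  have h2 := Real.sin_sq_add_cos_sq (y / 2)
  have : 2 * (y / 2) = y := by ring
  rw [this] at h1
  linarith

lemma norm_exp_sub_one_sq (θ : ℝ) :
    ‖Complex.exp ((θ : ℂ) * Complex.I) - 1‖ ^ 2 = 4 * Real.sin (θ / 2) ^ 2 := by
  rw [Complex.exp_mul_I]
  have : (Complex.cos θ + Complex.sin θ * Complex.I - 1)
      = Complex.ofReal (Real.cos θ - 1) + Complex.ofReal (Real.sin θ) * Complex.I := by
    push_cast [Complex.ofReal_cos, Complex.ofReal_sin]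
    ring
  rw [this]
  rw [Complex.sq_norm, Complex.normSq_apply]
  simp [Complex.add_re, Complex.add_im, Complex.cos_ofReal_re, Complex.sin_ofReal_re]
  have h2 := Real.sin_sq_add_cos_sq θ
  have h3 := sin_sq_half' θ
  nlinarith

lemma directivity_nonneg (N : ℕ) (x : ℝ) : 0 ≤ directivity N x := by
  unfold directivity; positivity

lemma directivity_key (N : ℕ) (x : ℝ) :
    directivity N x * Real.sin (Real.pi * x / 2) ^ 2
      = Real.sin (N * (Real.pi * x) / 2) ^ 2 := by
  have hterm : ∀ n : ℕ, Complex.I * (Real.pi : ℂ) * (n : ℂ) * (x : ℂ)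
      = (n : ℂ) * (((Real.pi * x : ℝ) : ℂ) * Complex.I) := by
    intro n; push_cast; ring
  have hsum : (∑ n ∈ Finset.range N, Complex.exp (Complex.I * (Real.pi : ℂ) * (n : ℂ) * (x : ℂ)))
      = ∑ n ∈ Finset.range N, (Complex.exp (((Real.pi * x : ℝ) : ℂ) * Complex.I)) ^ n := by
    refine Finset.sum_congr rfl fun n _ => ?_
    rw [hterm n, Complex.exp_nat_mul]
  by_cases hz : Complex.exp (((Real.pi * x : ℝ) : ℂ) * Complex.I) = 1
  · -- sin(πx/2) = 0 case
    obtain ⟨m, hm⟩ := Complex.exp_eq_one_iff.mp hz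
    -- (πx) * I = m * (2π I)  ⇒ x = 2m
    have hx : Real.pi * x = (m : ℝ) * (2 * Real.pi) := by
      have hm' : ((Real.pi * x : ℝ) : ℂ) * Complex.I
          = ((m : ℂ) * (2 * (Real.pi : ℂ))) * Complex.I := hm.trans (by ring)
      have hc : ((Real.pi * x : ℝ) : ℂ) = (m : ℂ) * (2 * (Real.pi : ℂ)) :=
        mul_right_cancel₀ Complex.I_ne_zero hm'
      have := congrArg Complex.re hc
      simpa using this
    have hs1 : Real.sin (Real.pi * x / 2) = 0 := by
      rw [hx]
      have : (m : ℝ) * (2 * Real.pi) / 2 = (m : ℝ) * Real.pi := by ring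
      rw [this]; exact Real.sin_int_mul_pi m
    have hs2 : Real.sin (N * (Real.pi * x) / 2) = 0 := by
      rw [hx]
      have : (N : ℝ) * ((m : ℝ) * (2 * Real.pi)) / 2 = ((N * m : ℤ) : ℝ) * Real.pi := by
        push_cast; ring
      rw [this]; exact Real.sin_int_mul_pi _
    rw [hs1, hs2]; ring
  · have hgeom := geom_sum_eq hz N
    unfold directivity
    rw [hsum, hgeom]
    rw [norm_div, div_pow]
    rw [← Complex.exp_nat_mul]
    have : (N : ℂ) * (((Real.pi * x : ℝ) : ℂ) * Complex.I) = ((N * (Real.pi * x) : ℝ) : ℂ) * Complex.I := by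
      push_cast; ring
    rw [this, norm_exp_sub_one_sq, norm_exp_sub_one_sq]
    have hden : Real.sin (Real.pi * x / 2) ^ 2 ≠ 0 := by
      intro h0
      apply hz
      have h0' : Real.sin (Real.pi * x / 2) = 0 := by
        exact pow_eq_zero_iff (n := 2) (by norm_num) |>.mp h0
      obtain ⟨n, hn⟩ := Real.sin_eq_zero_iff.mp h0'
      rw [Complex.exp_eq_one_iff]
      refine ⟨n, ?_⟩
      have : (Real.pi * x : ℝ) = (n : ℝ) * (2 * Real.pi) := by
        have := hn; nlinarith [hn]
      rw [this]; push_cast; ring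
    have hden1 : Real.sin (Real.pi * x / 2) ≠ 0 := fun h => hden (by rw [h]; norm_num)
    field_simp

lemma sin_sq_sub_nat_mul_pi (x : ℝ) (k : ℕ) :
    Real.sin (x - k * Real.pi) ^ 2 = Real.sin x ^ 2 := by
  induction k with
  | zero => simp
  | succ n ih =>
    have h : x - ((n + 1 : ℕ) : ℝ) * Real.pi = (x - n * Real.pi) - Real.pi := by
      push_cast; ring
    rw [h, Real.sin_sub_pi, neg_sq, ih]

lemma directivity_neg (N : ℕ) (x : ℝ) : directivity N (-x) = directivity N x := by
  unfold directivity
  congr 1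
  have h : ∀ n : ℕ, Complex.exp (Complex.I * (Real.pi : ℂ) * (n : ℂ) * ((-x : ℝ) : ℂ))
      = starRingEnd ℂ (Complex.exp (Complex.I * (Real.pi : ℂ) * (n : ℂ) * (x : ℂ))) := by
    intro n
    rw [← Complex.exp_conj]
    congr 1
    simp only [map_mul, Complex.conj_I, Complex.conj_ofReal, map_natCast]
    push_cast
    ring
  rw [Finset.sum_congr rfl fun n _ => h n, ← map_sum, RCLike.norm_conj]

lemma directivity_step (N k : ℕ) (hN2 : 2 ≤ N) (θ : ℝ)
    (hθ : |θ| ≤ 1 / N) (hk : 2 * k + 2 ≤ N) :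
    directivity N (θ - 2 * (k + 1) / N) ≤ directivity N (θ - 2 * k / N) ∧
    (0 < |θ| → |θ| < 1 / N →
      directivity N (θ - 2 * (k + 1) / N) < directivity N (θ - 2 * k / N)) := by
  have hNpos : (0 : ℝ) < N := by
    have : 0 < N := by omega
    exact_mod_cast this
  have hNne : (N : ℝ) ≠ 0 := ne_of_gt hNpos
  set a : ℝ := θ - 2 * k / N with ha
  set b : ℝ := θ - 2 * (k + 1) / N with hb
  set S : ℝ := Real.sin ((N : ℝ) * (Real.pi * θ) / 2) ^ 2 with hS
  -- the two key identities
  have hIa : directivity N a * Real.sin (Real.pi * a / 2) ^ 2 = S := by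
    rw [directivity_key]
    have : (N : ℝ) * (Real.pi * a) / 2 = (N : ℝ) * (Real.pi * θ) / 2 - k * Real.pi := by
      rw [ha]; field_simp
    rw [this, sin_sq_sub_nat_mul_pi]
  have hIb : directivity N b * Real.sin (Real.pi * b / 2) ^ 2 = S := by
    rw [directivity_key]
    have : (N : ℝ) * (Real.pi * b) / 2 = (N : ℝ) * (Real.pi * θ) / 2 - (k + 1 : ℕ) * Real.pi := by
      push_cast
      rw [hb]; field_simp
    rw [this, sin_sq_sub_nat_mul_pi]
  -- bounds on θ
  have hθ1 : -(1 / N) ≤ θ := neg_le_of_abs_le hθ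
  have hθ2 : θ ≤ 1 / N := le_of_abs_le hθ
  have hkN : (2 * k + 2 : ℝ) ≤ N := by exact_mod_cast hk
  have e1 : (0 : ℝ) ≤ 2 * k / N := by positivity
  have e2 : (2 : ℝ) * ((k : ℝ) + 1) / N = 2 * k / N + 2 * (1 / N) := by ring
  have e3 : (2 : ℝ) * k / N + 2 * (1 / N) ≤ 1 := by
    rw [← e2, div_le_one hNpos]; linarith
  have e4 : (0 : ℝ) < 1 / N := by positivity
  have e5 : (1 : ℝ) / N ≤ 1 / 2 := by
    apply one_div_le_one_div_of_le (by norm_num)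
    exact_mod_cast hN2
  have hbneg : b < 0 := by rw [hb]; push_cast; linarith
  have hbgt : -2 < b := by rw [hb]; push_cast; linarith
  -- sin (π b / 2) ^ 2 > 0
  have hsb : 0 < Real.sin (Real.pi * b / 2) ^ 2 := by
    have h0 : 0 < Real.sin (-(Real.pi * b / 2)) := by
      apply Real.sin_pos_of_pos_of_lt_pi
      · nlinarith [Real.pi_pos]
      · nlinarith [Real.pi_pos]
    rw [Real.sin_neg] at h0
    nlinarith
  -- cosine difference identity
  set c : ℝ := θ - (2 * k + 1) / N with hc
  have hcos : Real.cos (Real.pi * b) - Real.cos (Real.pi * a)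
      = 2 * Real.sin (Real.pi / N) * Real.sin (Real.pi * c) := by
    rw [Real.cos_sub_cos]
    have h1 : (Real.pi * b + Real.pi * a) / 2 = Real.pi * c := by
      rw [ha, hb, hc]; push_cast; ring
    have h2 : (Real.pi * b - Real.pi * a) / 2 = -(Real.pi / N) := by
      rw [ha, hb]; push_cast; ring
    rw [h1, h2, Real.sin_neg]; ring
  have hsinN : 0 < Real.sin (Real.pi / N) := by
    apply Real.sin_pos_of_pos_of_lt_pi (by positivity)
    rw [div_lt_iff₀ hNpos]
    have h2 : (2 : ℝ) ≤ N := by exact_mod_cast hN2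
    nlinarith [Real.pi_pos]
  have hc2 : (2 : ℝ) * k + 1 ≥ 1 := by
    have : (0 : ℝ) ≤ (k : ℝ) := Nat.cast_nonneg k
    linarith
  have hcsplit : ((2 : ℝ) * k + 1) / N = 2 * k / N + 1 / N := by ring
  have hcle : c ≤ 0 := by rw [hc, hcsplit]; linarith
  have hcge : -1 ≤ c := by rw [hc, hcsplit]; linarith
  have hsinc : Real.sin (Real.pi * c) ≤ 0 := by
    have h0 : 0 ≤ Real.sin (-(Real.pi * c)) := by
      apply Real.sin_nonneg_of_nonneg_of_le_pi
      · nlinarith [Real.pi_pos]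
      · nlinarith [Real.pi_pos]
    rw [Real.sin_neg] at h0
    linarith
  have hcosle : Real.cos (Real.pi * b) ≤ Real.cos (Real.pi * a) := by nlinarith
  have hmono : Real.sin (Real.pi * a / 2) ^ 2 ≤ Real.sin (Real.pi * b / 2) ^ 2 := by
    rw [sin_sq_half', sin_sq_half']
    linarith
  have hSnonneg : 0 ≤ S := sq_nonneg _
  constructor
  · -- nonstrict
    by_cases hS0 : S = 0
    · have hDb : directivity N b = 0 := by
        rw [hS0] at hIb
        rcases mul_eq_zero.mp hIb with h | h
        · exact h
        · exact absurd h (ne_of_gt hsb)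
      rw [hDb]; exact directivity_nonneg N a
    · have hSpos : 0 < S := lt_of_le_of_ne hSnonneg (Ne.symm hS0)
      have hsa : 0 < Real.sin (Real.pi * a / 2) ^ 2 := by
        rcases lt_or_eq_of_le (sq_nonneg (Real.sin (Real.pi * a / 2))) with h | h
        · exact h
        · exfalso; apply hS0; rw [← hIa, ← h]; ring
      have hDa : directivity N a = S / Real.sin (Real.pi * a / 2) ^ 2 :=
        (eq_div_iff (ne_of_gt hsa)).mpr hIa
      have hDb : directivity N b = S / Real.sin (Real.pi * b / 2) ^ 2 :=
        (eq_div_iff (ne_of_gt hsb)).mpr hIb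
      rw [hDa, hDb]
      exact div_le_div_of_nonneg_left hSnonneg hsa hmono
  · -- strict
    intro hθpos hθlt
    obtain ⟨hθl, hθr⟩ := abs_lt.mp hθlt
    have hθne : θ ≠ 0 := by
      intro h; rw [h] at hθpos; simp at hθpos
    have hx0 : (N : ℝ) * |θ| < 1 := by
      rw [lt_div_iff₀ hNpos] at hθlt
      linarith
    have habs0 : 0 < |(N : ℝ) * (Real.pi * θ) / 2| := by
      apply abs_pos.mpr
      exact div_ne_zero (mul_ne_zero hNne (mul_ne_zero Real.pi_ne_zero hθne)) two_ne_zero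
    have habs : |(N : ℝ) * (Real.pi * θ) / 2| = (N : ℝ) * (Real.pi * |θ|) / 2 := by
      rw [abs_div, abs_mul, abs_mul, _root_.abs_of_nonneg (le_of_lt hNpos),
        _root_.abs_of_nonneg Real.pi_pos.le]
      norm_num
    have habs1 : |(N : ℝ) * (Real.pi * θ) / 2| < Real.pi := by
      rw [habs]
      nlinarith [Real.pi_pos, abs_nonneg θ]
    have hsin0 : Real.sin ((N : ℝ) * (Real.pi * θ) / 2) ≠ 0 := by
      have hpos := Real.sin_pos_of_pos_of_lt_pi habs0 habs1
      rcases abs_cases ((N : ℝ) * (Real.pi * θ) / 2) with ⟨he, _⟩ | ⟨he, _⟩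
      · rw [he] at hpos; exact ne_of_gt hpos
      · rw [he, Real.sin_neg] at hpos
        intro h0; rw [h0] at hpos; simp at hpos
    have hSpos : 0 < S := by
      rw [hS]; exact pow_two_pos_of_ne_zero hsin0
    have hcltz : c < 0 := by rw [hc, hcsplit]; linarith
    have hcgtm : -1 < c := by rw [hc, hcsplit]; linarith
    have hsinc' : Real.sin (Real.pi * c) < 0 := by
      have h0 : 0 < Real.sin (-(Real.pi * c)) := by
        apply Real.sin_pos_of_pos_of_lt_pi
        · nlinarith [Real.pi_pos]
        · nlinarith [Real.pi_pos]
      rw [Real.sin_neg] at h0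
      linarith
    have hcoslt : Real.cos (Real.pi * b) < Real.cos (Real.pi * a) := by nlinarith
    have hmono' : Real.sin (Real.pi * a / 2) ^ 2 < Real.sin (Real.pi * b / 2) ^ 2 := by
      rw [sin_sq_half', sin_sq_half']
      linarith
    have hsa : 0 < Real.sin (Real.pi * a / 2) ^ 2 := by
      rcases lt_or_eq_of_le (sq_nonneg (Real.sin (Real.pi * a / 2))) with h | h
      · exact h
      · exfalso
        have : S = 0 := by rw [← hIa, ← h]; ring
        linarith
    have hDa : directivity N a = S / Real.sin (Real.pi * a / 2) ^ 2 :=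
      (eq_div_iff (ne_of_gt hsa)).mpr hIa
    have hDb : directivity N b = S / Real.sin (Real.pi * b / 2) ^ 2 :=
      (eq_div_iff (ne_of_gt hsb)).mpr hIb
    rw [hDa, hDb]
    exact div_lt_div_of_pos_left hSpos hsa hmono'

lemma directivity_chain (N : ℕ) (hN2 : 2 ≤ N) (θ : ℝ) (hθ : |θ| ≤ 1 / N) :
    ∀ d k : ℕ, 2 * (k + d) ≤ N →
      directivity N (θ - 2 * ((k : ℝ) + (d : ℝ)) / N) ≤ directivity N (θ - 2 * (k : ℝ) / N) := by
  intro d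
  induction d with
  | zero => intro k _; norm_num
  | succ n ih =>
    intro k h
    have h1 : 2 * (k + n) + 2 ≤ N := by omega
    have step := (directivity_step N (k + n) hN2 θ hθ h1).1
    have e1 : θ - 2 * ((k : ℝ) + ((n + 1 : ℕ) : ℝ)) / N
        = θ - 2 * (((k + n : ℕ) : ℝ) + 1) / N := by push_cast; ring
    have e2 : θ - 2 * ((k : ℝ) + (n : ℝ)) / N = θ - 2 * ((k + n : ℕ) : ℝ) / N := by
      push_cast; ring
    calc directivity N (θ - 2 * ((k : ℝ) + ((n + 1 : ℕ) : ℝ)) / N)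
        = directivity N (θ - 2 * (((k + n : ℕ) : ℝ) + 1) / N) := by rw [e1]
      _ ≤ directivity N (θ - 2 * ((k + n : ℕ) : ℝ) / N) := step
      _ = directivity N (θ - 2 * ((k : ℝ) + (n : ℝ)) / N) := by rw [e2]
      _ ≤ directivity N (θ - 2 * (k : ℝ) / N) := ih k (by omega)

lemma directivity_chain_strict (N : ℕ) (hN2 : 2 ≤ N) (θ : ℝ) (hθ : |θ| ≤ 1 / N)
    (hθpos : 0 < |θ|) (hθlt : |θ| < 1 / N) :
    ∀ d k : ℕ, 1 ≤ d → 2 * (k + d) ≤ N →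
      directivity N (θ - 2 * ((k : ℝ) + (d : ℝ)) / N) < directivity N (θ - 2 * (k : ℝ) / N) := by
  intro d
  induction d with
  | zero => intro k h; omega
  | succ n ih =>
    intro k _ h
    have h1 : 2 * (k + n) + 2 ≤ N := by omega
    have step := (directivity_step N (k + n) hN2 θ hθ h1).2 hθpos hθlt
    have e1 : θ - 2 * ((k : ℝ) + ((n + 1 : ℕ) : ℝ)) / N
        = θ - 2 * (((k + n : ℕ) : ℝ) + 1) / N := by push_cast; ring
    have e2 : θ - 2 * ((k : ℝ) + (n : ℝ)) / N = θ - 2 * ((k + n : ℕ) : ℝ) / N := by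
      push_cast; ring
    calc directivity N (θ - 2 * ((k : ℝ) + ((n + 1 : ℕ) : ℝ)) / N)
        = directivity N (θ - 2 * (((k + n : ℕ) : ℝ) + 1) / N) := by rw [e1]
      _ < directivity N (θ - 2 * ((k + n : ℕ) : ℝ) / N) := step
      _ = directivity N (θ - 2 * ((k : ℝ) + (n : ℝ)) / N) := by rw [e2]
      _ ≤ directivity N (θ - 2 * (k : ℝ) / N) := directivity_chain N hN2 θ hθ n k (by omega)

/-- **Unimodality of the mean RSS over the beam space (Theorem 1).**
Let `N` be a positive even integer, `ϑ` the channel spatial angle, `ω_i = (2i − N)/N`, and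
`D` the directivity function. If `|ω_{i⋆} − ϑ| ≤ 1/N`, then the map `i ↦ D(ω_i − ϑ)` is
nondecreasing on `[i⋆ − N/2, i⋆]` and nonincreasing on `[i⋆, i⋆ + N/2]`; moreover, if
`0 < |ω_{i⋆} − ϑ| < 1/N`, both monotonicities are strict. -/
theorem meanRSS_unimodal (N : ℕ) (hN : 0 < N) (hNeven : Even N) (ϑ : ℝ) (istar : ℤ)
    (hstar : |beamAngle N istar - ϑ| ≤ 1 / N) :
    (∀ i j : ℤ, istar - (N : ℤ) / 2 ≤ i → i ≤ j → j ≤ istar →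
        directivity N (beamAngle N i - ϑ) ≤ directivity N (beamAngle N j - ϑ)) ∧
    (∀ i j : ℤ, istar ≤ i → i ≤ j → j ≤ istar + (N : ℤ) / 2 →
        directivity N (beamAngle N j - ϑ) ≤ directivity N (beamAngle N i - ϑ)) ∧
    (0 < |beamAngle N istar - ϑ| → |beamAngle N istar - ϑ| < 1 / N →
      (∀ i j : ℤ, istar - (N : ℤ) / 2 ≤ i → i < j → j ≤ istar →
          directivity N (beamAngle N i - ϑ) < directivity N (beamAngle N j - ϑ)) ∧
      (∀ i j : ℤ, istar ≤ i → i < j → j ≤ istar + (N : ℤ) / 2 →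
          directivity N (beamAngle N j - ϑ) < directivity N (beamAngle N i - ϑ))) := by
  obtain ⟨m, hm⟩ := hNeven
  have hm1 : 1 ≤ m := by omega
  have hN2 : 2 ≤ N := by omega
  have hmz : (N : ℤ) = (m : ℤ) + (m : ℤ) := by exact_mod_cast hm
  have hNdiv : (N : ℤ) / 2 = (m : ℤ) := by omega
  have hNpos : (0 : ℝ) < N := by
    have : 0 < N := hN
    exact_mod_cast this
  have hNne : (N : ℝ) ≠ 0 := ne_of_gt hNpos
  set θ : ℝ := beamAngle N istar - ϑ with hθdef
  have hbeamL : ∀ i : ℤ, beamAngle N i - ϑ = θ - 2 * ((istar : ℝ) - (i : ℝ)) / N := by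
    intro i
    rw [hθdef]
    unfold beamAngle
    field_simp
    ring
  have hbeamR : ∀ i : ℤ, beamAngle N i - ϑ = -((-θ) - 2 * ((i : ℝ) - (istar : ℝ)) / N) := by
    intro i
    rw [hθdef]
    unfold beamAngle
    field_simp
    ring
  have hθn : |(-θ)| ≤ 1 / N := by rw [abs_neg]; exact hstar
  refine ⟨?_, ?_, ?_⟩
  · -- left, nonstrict
    intro i j h1 h2 h3
    set di : ℕ := (istar - i).toNat with hdi
    set dj : ℕ := (istar - j).toNat with hdj
    have hdiz : (di : ℤ) = istar - i := Int.toNat_of_nonneg (by omega)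
    have hdjz : (dj : ℤ) = istar - j := Int.toNat_of_nonneg (by omega)
    have hle : dj ≤ di := by omega
    have h2di : 2 * di ≤ N := by omega
    have hdiR : ((di : ℕ) : ℝ) = (istar : ℝ) - i := by exact_mod_cast congrArg Int.cast hdiz
    have hdjR : ((dj : ℕ) : ℝ) = (istar : ℝ) - j := by exact_mod_cast congrArg Int.cast hdjz
    have key := directivity_chain N hN2 θ hstar (di - dj) dj (by omega)
    have hsub : ((di - dj : ℕ) : ℝ) = (di : ℝ) - (dj : ℝ) := by
      push_cast [Nat.cast_sub hle]; ring
    rw [hbeamL i, hbeamL j, ← hdiR, ← hdjR]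
    have e : (di : ℝ) = (dj : ℝ) + ((di - dj : ℕ) : ℝ) := by rw [hsub]; ring
    rw [e]
    exact key
  · -- right, nonstrict
    intro i j h1 h2 h3
    set di : ℕ := (i - istar).toNat with hdi
    set dj : ℕ := (j - istar).toNat with hdj
    have hdiz : (di : ℤ) = i - istar := Int.toNat_of_nonneg (by omega)
    have hdjz : (dj : ℤ) = j - istar := Int.toNat_of_nonneg (by omega)
    have hle : di ≤ dj := by omega
    have h2dj : 2 * dj ≤ N := by omega
    have hdiR : ((di : ℕ) : ℝ) = (i : ℝ) - istar := by exact_mod_cast congrArg Int.cast hdiz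
    have hdjR : ((dj : ℕ) : ℝ) = (j : ℝ) - istar := by exact_mod_cast congrArg Int.cast hdjz
    have key := directivity_chain N hN2 (-θ) hθn (dj - di) di (by omega)
    have hsub : ((dj - di : ℕ) : ℝ) = (dj : ℝ) - (di : ℝ) := by
      push_cast [Nat.cast_sub hle]; ring
    rw [hbeamR i, hbeamR j, directivity_neg, directivity_neg, ← hdiR, ← hdjR]
    have e : (dj : ℝ) = (di : ℝ) + ((dj - di : ℕ) : ℝ) := by rw [hsub]; ring
    rw [e]
    exact key
  · -- strict
    intro hθpos hθlt
    have hθnpos : 0 < |(-θ)| := by rw [abs_neg]; exact hθpos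
    have hθnlt : |(-θ)| < 1 / N := by rw [abs_neg]; exact hθlt
    constructor
    · intro i j h1 h2 h3
      set di : ℕ := (istar - i).toNat with hdi
      set dj : ℕ := (istar - j).toNat with hdj
      have hdiz : (di : ℤ) = istar - i := Int.toNat_of_nonneg (by omega)
      have hdjz : (dj : ℤ) = istar - j := Int.toNat_of_nonneg (by omega)
      have hle : dj < di := by omega
      have h2di : 2 * di ≤ N := by omega
      have hdiR : ((di : ℕ) : ℝ) = (istar : ℝ) - i := by exact_mod_cast congrArg Int.cast hdiz
      have hdjR : ((dj : ℕ) : ℝ) = (istar : ℝ) - j := by exact_mod_cast congrArg Int.cast hdjz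
      have key := directivity_chain_strict N hN2 θ hstar hθpos hθlt (di - dj) dj
        (by omega) (by omega)
      have hsub : ((di - dj : ℕ) : ℝ) = (di : ℝ) - (dj : ℝ) := by
        push_cast [Nat.cast_sub (le_of_lt hle)]; ring
      rw [hbeamL i, hbeamL j, ← hdiR, ← hdjR]
      have e : (di : ℝ) = (dj : ℝ) + ((di - dj : ℕ) : ℝ) := by rw [hsub]; ring
      rw [e]
      exact key
    · intro i j h1 h2 h3
      set di : ℕ := (i - istar).toNat with hdi
      set dj : ℕ := (j - istar).toNat with hdj
      have hdiz : (di : ℤ) = i - istar := Int.toNat_of_nonneg (by omega)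
      have hdjz : (dj : ℤ) = j - istar := Int.toNat_of_nonneg (by omega)
      have hle : di < dj := by omega
      have h2dj : 2 * dj ≤ N := by omega
      have hdiR : ((di : ℕ) : ℝ) = (i : ℝ) - istar := by exact_mod_cast congrArg Int.cast hdiz
      have hdjR : ((dj : ℕ) : ℝ) = (j : ℝ) - istar := by exact_mod_cast congrArg Int.cast hdjz
      have key := directivity_chain_strict N hN2 (-θ) hθn hθnpos hθnlt (dj - di) di
        (by omega) (by omega)
      have hsub : ((dj - di : ℕ) : ℝ) = (dj : ℝ) - (di : ℝ) := by
        push_cast [Nat.cast_sub (le_of_lt hle)]; ring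
      rw [hbeamR i, hbeamR j, directivity_neg, directivity_neg, ← hdiR, ← hdjR]
      have e : (dj : ℝ) = (di : ℝ) + ((dj - di : ℕ) : ℝ) := by rw [hsub]; ring
      rw [e]
      exact key
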